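/- (Theorem 3) Let N ≥ 2 and let A(t) = (a_{ij}(t)), t ≥ 0, be a family of irreducible N×N matrices satisfying Condition A1, all having the same normalized positive left eigenvector ξ corresponding to eigenvalue 0; set Ξ = diag(ξ). Suppose there is λ < 0 such that for every t the largest nonzero eigenvalue λ_2(t) of Ξ A(t) + A(t)^T Ξ satisfies λ_2(t) ≤ λ. Let Γ = diag(γ_1,…,γ_n) be positive definite and suppose f ∈ QUAD(Δ,ϖ) with ϖ > 0. Let α > 0 and let x_1,…,x_N : [0,∞) → ℝ^n and c : [0,∞) → ℝ be differentiable functions satisfying, for all t ≥ 0, ẋ_i(t) = f(x_i(t),t) + c(t) Σ_{j≠i} a_{ij}(t) Γ (x_j(t) − x_i(t)), ċ(t) = −(α/2) Σ_{i,j} ξ_i a_{ij}(t) x_i(t)^T Γ x_j(t), and c(0) = 0. Then ‖x_i(t) − x_j(t)‖ → 0 as t → ∞ for all i, j, and c(t) converges to a finite limit. -/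

import Mathlib

/-!
Write `e_i = x_i - Σ_j ξ_j x_j` and `W = Σ_i ξ_i ‖e_i‖²`. Since `ξ` is a left null vector of `A`
and the rows of `A` sum to zero, the quadratic form `q = Σ_k γ_k Σ_{ij} ξ_i a_ij x_ik x_jk` that
drives `ċ = -(α/2) q` is unchanged when `x` is replaced by `e`; so the coupling contributes exactly
`2 c q` to `W'`, and the spectral gap gives `q ≤ -κ W`. QUAD bounds the uncoupled part of `W'` by
`2 L W` for any `L ≥ max_k (δ_k - ϖ)`. Hence `V = W + 2 (c - m)² / α` with `m κ = |L| + 1`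
satisfies `V' ≤ -2W`: the gain `c` is nondecreasing and bounded, so it converges, and `W → 0`
because `W'` is bounded above while `V` cannot keep dropping by a fixed amount on intervals of
fixed length.
-/

open Matrix Filter Set Finset Topology

lemma antitoneOn_of_hasDerivAt_nonpos {D : Set ℝ} (hD : Convex ℝ D) {f f' : ℝ → ℝ}
    (hf : ∀ x ∈ D, HasDerivAt f (f' x) x) (hf' : ∀ x ∈ D, f' x ≤ 0) : AntitoneOn f D :=
  antitoneOn_of_hasDerivWithinAt_nonpos hD (fun x hx => (hf x hx).continuousAt.continuousWithinAt)
    (fun x hx => (hf x (interior_subset hx)).hasDerivWithinAt)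
    (fun x hx => hf' x (interior_subset hx))

lemma monotoneOn_of_hasDerivAt_nonneg {D : Set ℝ} (hD : Convex ℝ D) {f f' : ℝ → ℝ}
    (hf : ∀ x ∈ D, HasDerivAt f (f' x) x) (hf' : ∀ x ∈ D, 0 ≤ f' x) : MonotoneOn f D :=
  monotoneOn_of_hasDerivWithinAt_nonneg hD (fun x hx => (hf x hx).continuousAt.continuousWithinAt)
    (fun x hx => (hf x (interior_subset hx)).hasDerivWithinAt)
    (fun x hx => hf' x (interior_subset hx))

lemma exists_tendsto_of_monotoneOn_Ici {g : ℝ → ℝ} {a B : ℝ} (hg : MonotoneOn g (Ici a))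
    (hB : ∀ t, a ≤ t → g t ≤ B) : ∃ l, Tendsto g atTop (𝓝 l) := by
  have hmono : Monotone fun t => g (max t a) := fun s t hst =>
    hg (le_max_right s a) (le_max_right t a) (max_le_max hst le_rfl)
  refine ⟨⨆ t, g (max t a), (tendsto_atTop_ciSup hmono ⟨B, ?_⟩).congr' ?_⟩
  · rintro _ ⟨t, rfl⟩
    exact hB _ (le_max_right t a)
  · filter_upwards [eventually_ge_atTop a] with t ht
    rw [max_eq_left ht]

lemma exists_tendsto_of_antitoneOn_Ici {g : ℝ → ℝ} {a B : ℝ} (hg : AntitoneOn g (Ici a))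
    (hB : ∀ t, a ≤ t → B ≤ g t) : ∃ l, Tendsto g atTop (𝓝 l) := by
  obtain ⟨l, hl⟩ := exists_tendsto_of_monotoneOn_Ici hg.neg fun t ht => neg_le_neg (hB t ht)
  exact ⟨-l, by simpa using hl.neg⟩

theorem tendsto_zero_of_hasDerivAt_le_neg {V V' W W' : ℝ → ℝ} {B M : ℝ}
    (hV : ∀ t, 0 ≤ t → HasDerivAt V (V' t) t) (hV' : ∀ t, 0 ≤ t → V' t ≤ -W t)
    (hVB : ∀ t, 0 ≤ t → B ≤ V t)
    (hW : ∀ t, 0 ≤ t → HasDerivAt W (W' t) t) (hW' : ∀ t, 0 ≤ t → W' t ≤ M)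
    (hW0 : ∀ t, 0 ≤ t → 0 ≤ W t) : Tendsto W atTop (𝓝 0) := by
  obtain ⟨l, hl⟩ := exists_tendsto_of_antitoneOn_Ici (antitoneOn_of_hasDerivAt_nonpos
    (convex_Ici 0) hV fun t ht => (hV' t ht).trans (neg_nonpos.2 (hW0 t ht))) hVB
  have hlin : ∀ s t, 0 ≤ s → s ≤ t → W t ≤ W s + M * (t - s) := by
    have hanti : AntitoneOn (fun t => W t - M * t) (Ici 0) :=
      antitoneOn_of_hasDerivAt_nonpos (convex_Ici 0)
        (fun t ht => (hW t ht).sub ((hasDerivAt_id t).const_mul M))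
        fun t ht => by linarith [hW' t ht]
    intro s t hs hst
    linarith [hanti hs (hs.trans hst) hst]
  refine tendsto_order.2 ⟨fun a ha => eventually_atTop.2 ⟨0, fun t ht => ha.trans_le (hW0 t ht)⟩,
    fun ε hε => ?_⟩
  set δ := ε / (2 * (|M| + 1)) with hδ_def
  have hδ : 0 < δ := by positivity
  have hMδ : |M| * δ ≤ ε / 2 := by
    rw [hδ_def, mul_div_assoc', div_le_div_iff₀ (by positivity) two_pos]
    nlinarith [abs_nonneg M]
  have hdrop : Tendsto (fun t => V (t - δ) - V t) atTop (𝓝 0) := by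
    simpa [← sub_eq_add_neg] using
      (hl.comp (tendsto_atTop_add_const_right _ (-δ) tendsto_id)).sub hl
  filter_upwards [hdrop.eventually (gt_mem_nhds (by positivity : 0 < ε * δ / 2)),
    eventually_ge_atTop δ] with t hsmall ht
  by_contra! hbig
  -- on `[t - δ, t]` the bound on `W'` keeps `W ≥ ε / 2`, so `V` drops by at least `ε δ / 2`
  have hanti : AntitoneOn (fun s => V s + ε / 2 * s) (Icc (t - δ) t) := by
    refine antitoneOn_of_hasDerivAt_nonpos (convex_Icc _ _)
      (fun s hs => (hV s (by linarith [hs.1])).add ((hasDerivAt_id s).const_mul _)) fun s hs => ?_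
    have hs0 : 0 ≤ s := by linarith [hs.1]
    have hMts : M * (t - s) ≤ ε / 2 := calc
      M * (t - s) ≤ |M| * δ := by
        nlinarith [le_abs_self M, abs_nonneg M, hs.1, hs.2]
      _ ≤ ε / 2 := hMδ
    linarith [hV' s hs0, hlin s t hs0 hs.2]
  have := hanti (left_mem_Icc.2 (by linarith)) (right_mem_Icc.2 (by linarith)) (by linarith)
  simp only at this
  nlinarith

theorem tendsto_of_adaptive_gain {W W' c q : ℝ → ℝ} {a κ L : ℝ} (ha : 0 < a) (hκ : 0 < κ)
    (hW : ∀ t, 0 ≤ t → HasDerivAt W (W' t) t) (hc : ∀ t, 0 ≤ t → HasDerivAt c (-a * q t) t)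
    (hW0 : ∀ t, 0 ≤ t → 0 ≤ W t) (hc0 : 0 ≤ c 0) (hq : ∀ t, 0 ≤ t → q t ≤ -κ * W t)
    (hW' : ∀ t, 0 ≤ t → W' t ≤ 2 * L * W t + 2 * c t * q t) :
    Tendsto W atTop (𝓝 0) ∧ ∃ c₀, Tendsto c atTop (𝓝 c₀) := by
  have hq0 : ∀ t, 0 ≤ t → q t ≤ 0 := fun t ht => (hq t ht).trans (by nlinarith [hW0 t ht])
  have hcmono : MonotoneOn c (Ici 0) :=
    monotoneOn_of_hasDerivAt_nonneg (convex_Ici 0) hc fun t ht => by nlinarith [hq0 t ht]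
  have hc_nonneg : ∀ t, 0 ≤ t → 0 ≤ c t := fun t ht => hc0.trans (hcmono self_mem_Ici ht ht)
  set m := (|L| + 1) / κ
  have hm : m * κ = |L| + 1 := div_mul_cancel₀ _ hκ.ne'
  have hm0 : 0 ≤ m := by positivity
  set V := fun t => W t + (c t - m) ^ 2 / a
  have hV : ∀ t, 0 ≤ t → HasDerivAt V (W' t - 2 * (c t - m) * q t) t := fun t ht =>
    ((hW t ht).add ((((hc t ht).sub_const m).fun_pow 2).div_const a)).congr_deriv (by
      field_simp
      ring)
  have hV' : ∀ t, 0 ≤ t → W' t - 2 * (c t - m) * q t ≤ -W t := fun t ht => by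
    have h2mq : m * q t ≤ -(|L| + 1) * W t := by
      rw [← hm]; nlinarith [mul_le_mul_of_nonneg_left (hq t ht) hm0]
    nlinarith [hW' t ht, le_abs_self L, hW0 t ht]
  have hV0 : ∀ t, 0 ≤ t → 0 ≤ V t := fun t ht => by positivity [hW0 t ht]
  have hVle : ∀ t, 0 ≤ t → V t ≤ V 0 := fun t ht =>
    antitoneOn_of_hasDerivAt_nonpos (convex_Ici 0) hV
      (fun s hs => (hV' s hs).trans (neg_nonpos.2 (hW0 s hs))) self_mem_Ici ht ht
  have hsq : ∀ t, 0 ≤ t → (c t - m) ^ 2 ≤ a * V 0 := fun t ht => by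
    have : (c t - m) ^ 2 / a ≤ V 0 := by linarith [hVle t ht, hW0 t ht]
    rwa [div_le_iff₀ ha, mul_comm] at this
  refine ⟨tendsto_zero_of_hasDerivAt_le_neg hV hV' hV0 hW (M := 2 * |L| * V 0) (fun t ht => ?_)
    hW0, exists_tendsto_of_monotoneOn_Ici hcmono (B := m + 1 + a * V 0) fun t ht => ?_⟩
  · have hWV : W t ≤ V 0 :=
      (le_add_of_nonneg_right (by positivity)).trans (hVle t ht)
    nlinarith [hW' t ht, le_abs_self L, abs_nonneg L, hW0 t ht, hc_nonneg t ht, hq0 t ht,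
      mul_nonneg (hc_nonneg t ht) (neg_nonneg.2 (hq0 t ht))]
  · nlinarith [hsq t ht, sq_nonneg (c t - m - 1)]

section WeightedMoments

variable {ι : Type*} [Fintype ι] {ξ : ι → ℝ}

variable (ξ) in
def weightedVariance (u : ι → ℝ) : ℝ := ∑ i, ξ i * (u i - ξ ⬝ᵥ u) ^ 2

variable (ξ) in
def weightedQuadForm (B : Matrix ι ι ℝ) (u : ι → ℝ) : ℝ := ∑ i, ∑ j, ξ i * B i j * u i * u j

lemma weightedVariance_nonneg (hξ : ∀ i, 0 ≤ ξ i) (u : ι → ℝ) : 0 ≤ weightedVariance ξ u :=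
  sum_nonneg fun i _ => mul_nonneg (hξ i) (sq_nonneg _)

lemma sum_mul_sub_dotProduct (hξ1 : ∑ i, ξ i = 1) (u : ι → ℝ) :
    ∑ i, ξ i * (u i - ξ ⬝ᵥ u) = 0 := by
  simp only [mul_sub, sum_sub_distrib, ← sum_mul, hξ1, one_mul, dotProduct, sub_self]

lemma sum_mul_sub_sq_eq (hξ1 : ∑ i, ξ i = 1) (u : ι → ℝ) (s : ℝ) :
    ∑ i, ξ i * (u i - s) ^ 2 = weightedVariance ξ u + (ξ ⬝ᵥ u - s) ^ 2 := by
  have h := sum_mul_sub_dotProduct hξ1 u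
  have hsplit : ∀ i, ξ i * (u i - s) ^ 2 = ξ i * (u i - ξ ⬝ᵥ u) ^ 2
      + 2 * (ξ ⬝ᵥ u - s) * (ξ i * (u i - ξ ⬝ᵥ u)) + (ξ ⬝ᵥ u - s) ^ 2 * ξ i := fun i => by ring
  simp only [hsplit, sum_add_distrib, ← mul_sum, h, hξ1, weightedVariance]
  ring

lemma weightedVariance_le_sum_sq_sub (hξ : ∀ i, 0 ≤ ξ i) (hξ1 : ∑ i, ξ i = 1) (u : ι → ℝ)
    (s : ℝ) : weightedVariance ξ u ≤ ∑ i, (u i - s) ^ 2 := calc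
  weightedVariance ξ u ≤ ∑ i, ξ i * (u i - s) ^ 2 := by
    rw [sum_mul_sub_sq_eq hξ1]
    exact le_add_of_nonneg_right (sq_nonneg _)
  _ ≤ ∑ i, (u i - s) ^ 2 := sum_le_sum fun i _ => by
    have : ξ i ≤ 1 := hξ1 ▸ single_le_sum (fun j _ => hξ j) (mem_univ i)
    nlinarith [sq_nonneg (u i - s)]

lemma hasDerivAt_weightedVariance (hξ1 : ∑ i, ξ i = 1) {u : ι → ℝ → ℝ} {u' : ι → ℝ} {t : ℝ}
    (hu : ∀ i, HasDerivAt (u i) (u' i) t) :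
    HasDerivAt (fun s => weightedVariance ξ fun i => u i s)
      (2 * ∑ i, ξ i * (u i t - ξ ⬝ᵥ fun i => u i t) * u' i) t := by
  have hmean : HasDerivAt (fun s => ξ ⬝ᵥ fun i => u i s) (ξ ⬝ᵥ u') t :=
    HasDerivAt.fun_sum fun i _ => (hu i).const_mul (ξ i)
  refine (HasDerivAt.fun_sum fun i _ =>
    (((hu i).sub hmean).fun_pow 2).const_mul (ξ i)).congr_deriv ?_
  have h := sum_mul_sub_dotProduct hξ1 fun i => u i t
  have hsplit : ∀ i, ξ i * (2 * (u i t - ξ ⬝ᵥ fun i => u i t) ^ (2 - 1) * (u' i - ξ ⬝ᵥ u'))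
      = 2 * (ξ i * (u i t - ξ ⬝ᵥ fun i => u i t) * u' i)
        - 2 * (ξ ⬝ᵥ u') * (ξ i * (u i t - ξ ⬝ᵥ fun i => u i t)) := fun i => by ring
  simp only [Pi.sub_apply, Nat.cast_ofNat, hsplit, sum_sub_distrib, ← mul_sum, h]
  ring

variable {B : Matrix ι ι ℝ}

lemma sum_erase_mul_sub [DecidableEq ι] (hrow : ∀ i, ∑ j, B i j = 0) (u : ι → ℝ) (i : ι) :
    ∑ j ∈ univ.erase i, B i j * (u j - u i) = ∑ j, B i j * u j := by
  rw [sum_erase _ (by simp), ← sub_zero (∑ j, B i j * u j), ← mul_zero (u i), ← hrow i, mul_sum,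
    ← sum_sub_distrib]
  exact sum_congr rfl fun j _ => by ring

lemma weightedQuadForm_add_const (hrow : ∀ i, ∑ j, B i j = 0)
    (hcol : ∀ j, ∑ i, ξ i * B i j = 0) (u : ι → ℝ) (s : ℝ) :
    weightedQuadForm ξ B (fun i => u i + s) = weightedQuadForm ξ B u := by
  have hsplit : ∀ i j, ξ i * B i j * (u i + s) * (u j + s) = ξ i * B i j * u i * u j
      + (s * u i + s * s) * (ξ i * B i j) + s * u j * (ξ i * B i j) := fun i j => by ring
  simp only [weightedQuadForm, hsplit, sum_add_distrib, ← mul_sum, hrow, mul_zero, add_zero]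
  rw [sum_comm (f := fun i j => s * u j * (ξ i * B i j))]
  simp only [← mul_sum, hcol, mul_zero, sum_const_zero, add_zero]

lemma dotProduct_symmetrized_mulVec (B : Matrix ι ι ℝ) (v : ι → ℝ) :
    v ⬝ᵥ (of fun i j => ξ i * B i j + B j i * ξ j) *ᵥ v = 2 * weightedQuadForm ξ B v := by
  have h1 : ∑ i, ∑ j, v i * (ξ i * B i j * v j) = weightedQuadForm ξ B v :=
    sum_congr rfl fun i _ => sum_congr rfl fun j _ => by ring
  have h2 : ∑ i, ∑ j, v i * (B j i * ξ j * v j) = weightedQuadForm ξ B v := by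
    rw [sum_comm]
    exact sum_congr rfl fun i _ => sum_congr rfl fun j _ => by ring
  simp only [dotProduct, mulVec, of_apply, add_mul, sum_add_distrib, mul_add, mul_sum, h1, h2]
  ring

lemma weightedQuadForm_le_mul_weightedVariance (hξ : ∀ i, 0 ≤ ξ i) (hξ1 : ∑ i, ξ i = 1)
    (hrow : ∀ i, ∑ j, B i j = 0) (hcol : ∀ j, ∑ i, ξ i * B i j = 0) {lam : ℝ} (hlam : lam ≤ 0)
    (hspec : ∀ v : ι → ℝ, ∑ i, v i = 0 →
      v ⬝ᵥ (of fun i j => ξ i * B i j + B j i * ξ j) *ᵥ v ≤ lam * ∑ i, v i ^ 2)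
    (u : ι → ℝ) : weightedQuadForm ξ B u ≤ lam / 2 * weightedVariance ξ u := by
  set s := (∑ i, u i) / Fintype.card ι
  set w := fun i => u i - s
  have hw : ∑ i, w i = 0 := by
    rcases isEmpty_or_nonempty ι with hι | hι
    · simp
    · simp only [w, sum_sub_distrib, sum_const, card_univ, nsmul_eq_mul, s]
      rw [mul_div_cancel₀ _ (by positivity), sub_self]
  have hQ : weightedQuadForm ξ B u = weightedQuadForm ξ B w := by
    rw [← weightedQuadForm_add_const hrow hcol w s]
    simp [w]
  have := hspec w hw
  rw [dotProduct_symmetrized_mulVec] at this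
  nlinarith [mul_le_mul_of_nonpos_left (weightedVariance_le_sum_sq_sub hξ hξ1 u s) hlam]

lemma sum_mul_sub_dotProduct_mul_sum (hcol : ∀ j, ∑ i, ξ i * B i j = 0) (u : ι → ℝ) :
    ∑ i, ξ i * (u i - ξ ⬝ᵥ u) * ∑ j, B i j * u j = weightedQuadForm ξ B u := by
  have hsplit : ∀ i j, ξ i * (u i - ξ ⬝ᵥ u) * (B i j * u j)
      = ξ i * B i j * u i * u j - ξ ⬝ᵥ u * u j * (ξ i * B i j) := fun i j => by ring
  simp only [mul_sum, hsplit, sum_sub_distrib, weightedQuadForm]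
  rw [sum_comm (f := fun i j => ξ ⬝ᵥ u * u j * (ξ i * B i j))]
  simp only [← mul_sum, hcol, mul_zero, sum_const_zero, sub_zero]

lemma sum_mul_sub_dotProduct_mul_coupled [DecidableEq ι] (hξ1 : ∑ i, ξ i = 1)
    (hrow : ∀ i, ∑ j, B i j = 0) (hcol : ∀ j, ∑ i, ξ i * B i j = 0) (u φ : ι → ℝ) (r c γ : ℝ) :
    ∑ i, ξ i * (u i - ξ ⬝ᵥ u) * (φ i + c * ∑ j ∈ univ.erase i, B i j * (γ * (u j - u i)))
      = ∑ i, ξ i * (u i - ξ ⬝ᵥ u) * (φ i - r) + c * γ * weightedQuadForm ξ B u := by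
  have hcoup : ∀ i, ∑ j ∈ univ.erase i, B i j * (γ * (u j - u i)) = γ * ∑ j, B i j * u j :=
    fun i => by simp only [mul_left_comm _ γ, ← mul_sum, sum_erase_mul_sub hrow]
  have hsplit : ∀ i, ξ i * (u i - ξ ⬝ᵥ u) * (φ i + c * (γ * ∑ j, B i j * u j))
      = ξ i * (u i - ξ ⬝ᵥ u) * (φ i - r) + r * (ξ i * (u i - ξ ⬝ᵥ u))
        + c * γ * (ξ i * (u i - ξ ⬝ᵥ u) * ∑ j, B i j * u j) := fun i => by ring
  simp only [hcoup, hsplit, sum_add_distrib, ← mul_sum, sum_mul_sub_dotProduct hξ1,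
    sum_mul_sub_dotProduct_mul_sum hcol, mul_zero, add_zero]

end WeightedMoments

lemma exists_pos_forall_le {σ : Type*} [Finite σ] {γ : σ → ℝ} (hγ : ∀ k, 0 < γ k) :
    ∃ γ₀ > 0, ∀ k, γ₀ ≤ γ k := by
  rcases isEmpty_or_nonempty σ with hσ | hσ
  · exact ⟨1, one_pos, isEmptyElim⟩
  · obtain ⟨k₀, hk₀⟩ := Finite.exists_min γ
    exact ⟨γ k₀, hγ k₀, hk₀⟩

lemma sum_mul_le_mul_sum {σ : Type*} [Fintype σ] {γ a b : σ → ℝ} {γ₀ : ℝ} (hγ₀ : 0 ≤ γ₀)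
    (hγ : ∀ k, γ₀ ≤ γ k) (hab : ∀ k, a k ≤ b k) (hb : ∀ k, b k ≤ 0) :
    ∑ k, γ k * a k ≤ γ₀ * ∑ k, b k := by
  rw [mul_sum]
  exact sum_le_sum fun k _ => by nlinarith [hγ k, hab k, hb k]

lemma sum_mul_sub_le_of_quad {σ : Type*} [Fintype σ] {y z g δ : σ → ℝ} {ϖ L : ℝ}
    (hquad : ∑ k, (y k - z k) * g k - ∑ k, δ k * (y k - z k) ^ 2 ≤ -ϖ * ∑ k, (y k - z k) ^ 2)
    (hL : ∀ k, δ k - ϖ ≤ L) : ∑ k, (y k - z k) * g k ≤ L * ∑ k, (y k - z k) ^ 2 := by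
  have : ∑ k, δ k * (y k - z k) ^ 2 - ϖ * ∑ k, (y k - z k) ^ 2 ≤ L * ∑ k, (y k - z k) ^ 2 := by
    rw [mul_sum, mul_sum, ← sum_sub_distrib]
    exact sum_le_sum fun k _ => by nlinarith [hL k, sq_nonneg (y k - z k)]
  linarith

section Agents

variable {ι σ : Type*} [Fintype ι] [Fintype σ] {ξ : ι → ℝ} {B : Matrix ι ι ℝ}

variable (ξ B) in
lemma sum_sum_mul_sum_mul (X : ι → σ → ℝ) (γ : σ → ℝ) :
    ∑ i, ∑ j, ξ i * B i j * ∑ k, X i k * γ k * X j k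
      = ∑ k, γ k * weightedQuadForm ξ B fun i => X i k := by
  calc ∑ i, ∑ j, ξ i * B i j * ∑ k, X i k * γ k * X j k
      = ∑ i, ∑ k, ∑ j, γ k * (ξ i * B i j * X i k * X j k) := sum_congr rfl fun i _ => by
        simp only [mul_sum]
        rw [sum_comm]
        exact sum_congr rfl fun k _ => sum_congr rfl fun j _ => by ring
    _ = ∑ k, γ k * weightedQuadForm ξ B fun i => X i k := by
        rw [sum_comm]
        simp only [weightedQuadForm, mul_sum]

lemma sum_mul_sub_dotProduct_mul_coupled_le [DecidableEq ι] (hξ : ∀ i, 0 ≤ ξ i)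
    (hξ1 : ∑ i, ξ i = 1) (hrow : ∀ i, ∑ j, B i j = 0) (hcol : ∀ j, ∑ i, ξ i * B i j = 0)
    (X F : ι → σ → ℝ) (F₀ : σ → ℝ) (γ : σ → ℝ) (c L : ℝ)
    (hF : ∀ i, ∑ k, (X i k - ξ ⬝ᵥ fun i => X i k) * (F i k - F₀ k)
      ≤ L * ∑ k, (X i k - ξ ⬝ᵥ fun i => X i k) ^ 2) :
    ∑ k, 2 * ∑ i, ξ i * (X i k - ξ ⬝ᵥ fun i => X i k)
        * (F i k + c * ∑ j ∈ univ.erase i, B i j * (γ k * (X j k - X i k)))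
      ≤ 2 * L * ∑ k, weightedVariance ξ (fun i => X i k)
        + 2 * c * ∑ k, γ k * weightedQuadForm ξ B fun i => X i k := by
  have hcoupled : ∀ k, ∑ i, ξ i * (X i k - ξ ⬝ᵥ fun i => X i k)
        * (F i k + c * ∑ j ∈ univ.erase i, B i j * (γ k * (X j k - X i k)))
      = ∑ i, ξ i * (X i k - ξ ⬝ᵥ fun i => X i k) * (F i k - F₀ k)
        + c * γ k * weightedQuadForm ξ B fun i => X i k := fun k =>
    sum_mul_sub_dotProduct_mul_coupled hξ1 hrow hcol (fun i => X i k) (fun i => F i k) (F₀ k) c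
      (γ k)
  simp only [hcoupled]
  have hFsum : ∑ k, ∑ i, ξ i * (X i k - ξ ⬝ᵥ fun i => X i k) * (F i k - F₀ k)
      ≤ L * ∑ k, weightedVariance ξ fun i => X i k := calc
    ∑ k, ∑ i, ξ i * (X i k - ξ ⬝ᵥ fun i => X i k) * (F i k - F₀ k)
      = ∑ i, ξ i * ∑ k, (X i k - ξ ⬝ᵥ fun i => X i k) * (F i k - F₀ k) := by
      rw [sum_comm]
      simp only [mul_sum, mul_assoc]
    _ ≤ ∑ i, ξ i * (L * ∑ k, (X i k - ξ ⬝ᵥ fun i => X i k) ^ 2) :=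
      sum_le_sum fun i _ => mul_le_mul_of_nonneg_left (hF i) (hξ i)
    _ = L * ∑ k, weightedVariance ξ fun i => X i k := by
      simp only [weightedVariance, mul_sum]
      rw [sum_comm]
      exact sum_congr rfl fun i _ => sum_congr rfl fun k _ => by ring
  have hsplit : ∀ k, 2 * (∑ i, ξ i * (X i k - ξ ⬝ᵥ fun i => X i k) * (F i k - F₀ k)
      + c * γ k * weightedQuadForm ξ B fun i => X i k)
      = 2 * ∑ i, ξ i * (X i k - ξ ⬝ᵥ fun i => X i k) * (F i k - F₀ k)
        + 2 * c * (γ k * weightedQuadForm ξ B fun i => X i k) := fun k => by ring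
  simp only [hsplit, sum_add_distrib, ← mul_sum]
  linarith

lemma tendsto_norm_sub_of_tendsto_sum_weightedVariance (hξ : ∀ i, 0 < ξ i)
    {x : ι → ℝ → σ → ℝ}
    (hW : Tendsto (fun t => ∑ k, weightedVariance ξ fun i => x i t k) atTop (𝓝 0)) (i j : ι) :
    Tendsto (fun t => ‖x i t - x j t‖) atTop (𝓝 0) := by
  have hdev : ∀ i k, Tendsto (fun t => x i t k - ξ ⬝ᵥ fun i => x i t k) atTop (𝓝 0) := by
    intro i k
    refine squeeze_zero_norm (fun t => Real.abs_le_sqrt ?_)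
      (by simpa using (hW.div_const (ξ i)).sqrt)
    rw [le_div_iff₀' (hξ i)]
    refine le_trans ?_ (single_le_sum (fun k _ => weightedVariance_nonneg (fun i => (hξ i).le) _)
      (mem_univ k))
    exact single_le_sum (f := fun i => ξ i * (x i t k - ξ ⬝ᵥ fun i => x i t k) ^ 2)
      (fun i _ => mul_nonneg (hξ i).le (sq_nonneg _)) (mem_univ i)
  have hsub : Tendsto (fun t => x i t - x j t) atTop (𝓝 0) :=
    tendsto_pi_nhds.2 fun k => by simpa using (hdev i k).sub (hdev j k)
  simpa using hsub.norm

end Agents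

theorem stmt14_general (N n : ℕ) (A : ℝ → Matrix (Fin N) (Fin N) ℝ)
    (hdiag : ∀ t : ℝ, 0 ≤ t → ∀ i, A t i i = -∑ j ∈ Finset.univ.erase i, A t i j)
    (ξ : Fin N → ℝ) (hξpos : ∀ i, 0 < ξ i) (hξsum : ∑ i, ξ i = 1)
    (hξeig : ∀ t : ℝ, 0 ≤ t → Matrix.vecMul ξ (A t) = 0)
    (lam : ℝ) (hlam : lam < 0)
    (hspec : ∀ t : ℝ, 0 ≤ t → ∀ v : Fin N → ℝ, (∑ i, v i) = 0 →
      v ⬝ᵥ (Matrix.of fun i j => ξ i * A t i j + A t j i * ξ j).mulVec v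
        ≤ lam * ∑ i, (v i) ^ 2)
    (γ : Fin n → ℝ) (hγ : ∀ k, 0 < γ k)
    (δ : Fin n → ℝ) (ϖ : ℝ)
    (f : (Fin n → ℝ) → ℝ → (Fin n → ℝ))
    (hQUAD : ∀ x y : Fin n → ℝ, ∀ t : ℝ, 0 ≤ t →
      (∑ k, (x k - y k) * (f x t k - f y t k)) - (∑ k, δ k * (x k - y k) ^ 2)
        ≤ -ϖ * ∑ k, (x k - y k) ^ 2)
    (α : ℝ) (hα : 0 < α)
    (x : Fin N → ℝ → (Fin n → ℝ)) (c : ℝ → ℝ) (hc0 : c 0 = 0)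
    (hODE : ∀ i, ∀ t : ℝ, 0 ≤ t →
      HasDerivAt (x i)
        (fun k => f (x i t) t k
          + c t * ∑ j ∈ Finset.univ.erase i, A t i j * (γ k * (x j t k - x i t k))) t)
    (hcODE : ∀ t : ℝ, 0 ≤ t →
      HasDerivAt c
        (-(α / 2) * ∑ i, ∑ j, ξ i * A t i j * ∑ k, x i t k * γ k * x j t k) t) :
    (∀ i j, Tendsto (fun t => ‖x i t - x j t‖) atTop (nhds 0)) ∧
    ∃ c₀ : ℝ, Tendsto c atTop (nhds c₀) := by
  have hξ : ∀ i, 0 ≤ ξ i := fun i => (hξpos i).le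
  have hrow : ∀ t, 0 ≤ t → ∀ i, ∑ j, A t i j = 0 := fun t ht i => by
    rw [← add_sum_erase _ _ (mem_univ i), hdiag t ht i, neg_add_cancel]
  have hcol : ∀ t, 0 ≤ t → ∀ j, ∑ i, ξ i * A t i j = 0 := fun t ht j => by
    simpa [vecMul, dotProduct] using congrFun (hξeig t ht) j
  obtain ⟨γ₀, hγ₀, hγ₀le⟩ := exists_pos_forall_le hγ
  obtain ⟨L, hL⟩ := (Set.finite_range fun k => δ k - ϖ).bddAbove
  have hq : ∀ t, 0 ≤ t → ∑ k, γ k * weightedQuadForm ξ (A t) (fun i => x i t k)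
      ≤ -(γ₀ * (-lam / 2)) * ∑ k, weightedVariance ξ fun i => x i t k := fun t ht => by
    have hQ := fun k => weightedQuadForm_le_mul_weightedVariance hξ hξsum (hrow t ht)
      (hcol t ht) hlam.le (hspec t ht) fun i => x i t k
    refine (sum_mul_le_mul_sum hγ₀.le hγ₀le hQ fun k => ?_).trans_eq (by rw [← mul_sum]; ring)
    exact mul_nonpos_of_nonpos_of_nonneg (by linarith) (weightedVariance_nonneg hξ _)
  obtain ⟨hW, hc⟩ := tendsto_of_adaptive_gain (half_pos hα) (mul_pos hγ₀ (by linarith))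
    (fun t ht => HasDerivAt.fun_sum fun k _ =>
      hasDerivAt_weightedVariance hξsum fun i => hasDerivAt_pi.1 (hODE i t ht) k)
    (fun t ht => (hcODE t ht).congr_deriv
      (congrArg _ (sum_sum_mul_sum_mul ξ (A t) (fun i k => x i t k) γ)))
    (fun t _ => sum_nonneg fun k _ => weightedVariance_nonneg hξ _) hc0.ge hq
    (fun t ht => sum_mul_sub_dotProduct_mul_coupled_le hξ hξsum (hrow t ht) (hcol t ht)
      (fun i k => x i t k) (fun i k => f (x i t) t k) (f (fun k => ξ ⬝ᵥ fun i => x i t k) t)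
      γ (c t) L fun i => sum_mul_sub_le_of_quad (hQUAD _ _ t ht) fun k => hL ⟨k, rfl⟩)
  exact ⟨tendsto_norm_sub_of_tendsto_sum_weightedVariance hξpos hW, hc⟩

/-- Theorem 3: time-varying coupling. A(t), t ≥ 0, is a family of
irreducible matrices satisfying Condition A1 with a common normalized positive left
0-eigenvector ξ (Ξ = diag ξ), whose symmetrized matrices ΞA(t) + A(t)ᵀΞ have largest
nonzero eigenvalue λ₂(t) ≤ λ < 0 (expressed variationally: the quadratic form on the
orthogonal complement of the all-ones vector is ≤ λ‖v‖²). With Γ = diag(γ) > 0,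
f ∈ QUAD(Δ,ϖ), and the adaptive scheme
ẋᵢ = f(xᵢ,t) + c(t) Σ_{j≠i} a_{ij}(t) Γ(xⱼ − xᵢ),
ċ = −(α/2) Σᵢⱼ ξᵢ a_{ij}(t) xᵢᵀΓxⱼ, c(0) = 0,
then ‖xᵢ(t) − xⱼ(t)‖ → 0 for all i,j and c(t) converges to a finite limit. -/
theorem stmt14 (N n : ℕ) (hN : 2 ≤ N) (A : ℝ → Matrix (Fin N) (Fin N) ℝ)
    (hoff : ∀ t : ℝ, 0 ≤ t → ∀ i j, i ≠ j → 0 ≤ A t i j)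
    (hdiag : ∀ t : ℝ, 0 ≤ t → ∀ i, A t i i = -∑ j ∈ Finset.univ.erase i, A t i j)
    (hirr : ∀ t : ℝ, 0 ≤ t → ∀ S : Finset (Fin N), S.Nonempty → S ≠ Finset.univ →
      ∃ i ∈ S, ∃ j, j ∉ S ∧ A t i j ≠ 0)
    (ξ : Fin N → ℝ) (hξpos : ∀ i, 0 < ξ i) (hξsum : ∑ i, ξ i = 1)
    (hξeig : ∀ t : ℝ, 0 ≤ t → Matrix.vecMul ξ (A t) = 0)
    (lam : ℝ) (hlam : lam < 0)
    (hspec : ∀ t : ℝ, 0 ≤ t → ∀ v : Fin N → ℝ, (∑ i, v i) = 0 →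
      v ⬝ᵥ (Matrix.of fun i j => ξ i * A t i j + A t j i * ξ j).mulVec v
        ≤ lam * ∑ i, (v i) ^ 2)
    (γ : Fin n → ℝ) (hγ : ∀ k, 0 < γ k)
    (δ : Fin n → ℝ) (ϖ : ℝ) (hϖ : 0 < ϖ)
    (f : (Fin n → ℝ) → ℝ → (Fin n → ℝ))
    (hf : Continuous fun p : (Fin n → ℝ) × ℝ => f p.1 p.2)
    (hQUAD : ∀ x y : Fin n → ℝ, ∀ t : ℝ, 0 ≤ t →
      (∑ k, (x k - y k) * (f x t k - f y t k)) - (∑ k, δ k * (x k - y k) ^ 2)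
        ≤ -ϖ * ∑ k, (x k - y k) ^ 2)
    (α : ℝ) (hα : 0 < α)
    (x : Fin N → ℝ → (Fin n → ℝ)) (c : ℝ → ℝ) (hc0 : c 0 = 0)
    (hODE : ∀ i, ∀ t : ℝ, 0 ≤ t →
      HasDerivAt (x i)
        (fun k => f (x i t) t k
          + c t * ∑ j ∈ Finset.univ.erase i, A t i j * (γ k * (x j t k - x i t k))) t)
    (hcODE : ∀ t : ℝ, 0 ≤ t →
      HasDerivAt c
        (-(α / 2) * ∑ i, ∑ j, ξ i * A t i j * ∑ k, x i t k * γ k * x j t k) t) :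
    (∀ i j, Tendsto (fun t => ‖x i t - x j t‖) atTop (nhds 0)) ∧
    ∃ c₀ : ℝ, Tendsto c atTop (nhds c₀) :=
  stmt14_general N n A hdiag ξ hξpos hξsum hξeig lam hlam hspec γ hγ δ ϖ f hQUAD α hα x c hc0 hODE
    hcODE
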